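/- Let A be a Banach algebra and let A** denote its bidual equipped with the first Arens product. If the weak topological center of A** (the set of a'' in A** such that the map b'' ↦ a''b'' is weak*-to-weak continuous) equals all of A**, then A is Arens regular (i.e., the two Arens products on A** coincide). -/

import Mathlib

open NormedSpace ContinuousLinearMap

noncomputable section

section Core

instance (E : Type*) [SeminormedAddCommGroup E] [NormedSpace ℝ E] : AddCommGroup (StrongDual ℝ E) :=
  ContinuousLinearMap.addCommGroup

instance (E : Type*) [NonUnitalSeminormedRing E] [NormedSpace ℝ E] :
    SeminormedAddCommGroup (StrongDual ℝ E) :=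
  ContinuousLinearMap.toSeminormedAddCommGroup

variable (X Y Z : Type*)
  [NormedAddCommGroup X] [NormedSpace ℝ X]
  [NormedAddCommGroup Y] [NormedSpace ℝ Y]
  [NormedAddCommGroup Z] [NormedSpace ℝ Z]

/-- The dual (adjoint) map of a continuous linear map. -/
def dualMapCLM (T : X →L[ℝ] Y) : StrongDual ℝ Y →L[ℝ] StrongDual ℝ X :=
  (ContinuousLinearMap.compSL X Y ℝ (RingHom.id ℝ) (RingHom.id ℝ)).flip T

variable {X Y Z}

/-- The adjoint of a continuous bilinear map `m : X × Y → Z`, as a bilinear map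
`Z* × X → Y*`, `⟨adjBil m z' x, y⟩ = ⟨z', m x y⟩`. -/
def adjBil (m : X →L[ℝ] Y →L[ℝ] Z) : StrongDual ℝ Z →L[ℝ] X →L[ℝ] StrongDual ℝ Y :=
  ((ContinuousLinearMap.compSL X (Y →L[ℝ] Z) (StrongDual ℝ Y) (RingHom.id ℝ) (RingHom.id ℝ)).flip m).comp
    (ContinuousLinearMap.compSL Y Z ℝ (RingHom.id ℝ) (RingHom.id ℝ))

/-- The first Arens extension of a continuous bilinear map `X × Y → Z`
to the biduals, `X** × Y** → Z**`. -/
def arensExt (m : X →L[ℝ] Y →L[ℝ] Z) :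
    StrongDual ℝ (StrongDual ℝ X) →L[ℝ] StrongDual ℝ (StrongDual ℝ Y) →L[ℝ] StrongDual ℝ (StrongDual ℝ Z) :=
  adjBil (adjBil (adjBil m))

variable (E : Type*) [NormedAddCommGroup E] [NormedSpace ℝ E]

/-- The weak-* topology on the bidual `E**`, i.e. the topology of pointwise
convergence on `E*`. -/
def weakStarTop : TopologicalSpace (StrongDual ℝ (StrongDual ℝ E)) :=
  ⨅ f : StrongDual ℝ E, TopologicalSpace.induced (fun F => F f) inferInstance

/-- The weak topology on the bidual `E**`, i.e. the topology of pointwise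
convergence on `E***`. -/
def weakTop : TopologicalSpace (StrongDual ℝ (StrongDual ℝ E)) :=
  ⨅ Φ : StrongDual ℝ (StrongDual ℝ (StrongDual ℝ E)), TopologicalSpace.induced (fun F => Φ F) inferInstance

end Core

section Algebra

variable (A : Type*) [NonUnitalNormedRing A] [NormedSpace ℝ A]
  [IsScalarTower ℝ A A] [SMulCommClass ℝ A A]

/-- The first Arens product on the bidual of a Banach algebra. -/
def arens1 : StrongDual ℝ (StrongDual ℝ A) →L[ℝ] StrongDual ℝ (StrongDual ℝ A) →L[ℝ] StrongDual ℝ (StrongDual ℝ A) :=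
  arensExt (ContinuousLinearMap.mul ℝ A)

/-- The second Arens product on the bidual of a Banach algebra. -/
def arens2 (F G : StrongDual ℝ (StrongDual ℝ A)) : StrongDual ℝ (StrongDual ℝ A) :=
  arensExt ((ContinuousLinearMap.mul ℝ A).flip) G F

/-- The weak left topological center of `A**`: those `F` such that
`G ↦ F □ G` is weak-*-to-weak continuous. -/
def weakLeftCenter : Set (StrongDual ℝ (StrongDual ℝ A)) :=
  { F | ∀ Φ : StrongDual ℝ (StrongDual ℝ (StrongDual ℝ A)),
      @Continuous _ _ (weakStarTop A) _ fun G => Φ (arens1 A F G) }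

/-- The left topological center of `A**`: those `F` such that
`G ↦ F □ G` is weak-*-to-weak-* continuous. -/
def leftCenter : Set (StrongDual ℝ (StrongDual ℝ A)) :=
  { F | ∀ f : StrongDual ℝ A,
      @Continuous _ _ (weakStarTop A) _ fun G => arens1 A F G f }

end Algebra

/-!
For fixed `F ∈ A**` and `f ∈ A*`, both `G ↦ ⟨F □ G, f⟩` and `G ↦ ⟨F ◇ G, f⟩` are weak-*
continuous linear functionals on `A**`: the first because `F` lies in the weak topological center
(evaluation at `f` is weak continuous), the second always, since it is evaluation at an element
of `A*`. A weak-* continuous functional on `A**` is evaluation at some element of `A*`, so it is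
determined by its values on `A`, where the two Arens products agree.
-/

section WeakStar

open Topology

variable {E : Type*} [NormedAddCommGroup E] [NormedSpace ℝ E]

theorem exists_eq_apply_of_continuous_weakStarTop
    {Φ : StrongDual ℝ (StrongDual ℝ (StrongDual ℝ E))} (hΦ : Continuous[weakStarTop E, _] Φ) :
    ∃ g : StrongDual ℝ E, ∀ G, Φ G = G g := by
  let L : StrongDual ℝ E →ₗ[ℝ] StrongDual ℝ (StrongDual ℝ E) →ₗ[ℝ] ℝ :=
    ContinuousLinearMap.coeLM ℝ ∘ₗ (ContinuousLinearMap.apply ℝ ℝ).toLinearMap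
  have hspan : (Φ : StrongDual ℝ (StrongDual ℝ E) →ₗ[ℝ] ℝ) ∈ Submodule.span ℝ (Set.range L) :=
    (LinearMap.mem_span_iff_continuous _).2 hΦ
  rw [← LinearMap.coe_range, Submodule.span_eq] at hspan
  obtain ⟨g, hg⟩ := hspan
  exact ⟨g, fun G => (LinearMap.congr_fun hg G).symm⟩

theorem apply_eq_of_continuous_weakStarTop
    {Φ : StrongDual ℝ (StrongDual ℝ (StrongDual ℝ E))} (hΦ : Continuous[weakStarTop E, _] Φ)
    {g : StrongDual ℝ E} (h : ∀ x, Φ (inclusionInDoubleDual ℝ E x) = g x)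
    (G : StrongDual ℝ (StrongDual ℝ E)) : Φ G = G g := by
  obtain ⟨g', hg'⟩ := exists_eq_apply_of_continuous_weakStarTop hΦ
  obtain rfl : g' = g := by
    ext x
    rw [← h x, hg']
    rfl
  exact hg' G

end WeakStar

section Arens

open Topology

variable {A : Type*} [NonUnitalNormedRing A] [NormedSpace ℝ A]
  [IsScalarTower ℝ A A] [SMulCommClass ℝ A A]

theorem continuous_arens1_apply_of_mem_weakLeftCenter {F : StrongDual ℝ (StrongDual ℝ A)}
    (hF : F ∈ weakLeftCenter A) (f : StrongDual ℝ A) :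
    Continuous[weakStarTop A, _] fun G => arens1 A F G f :=
  hF (inclusionInDoubleDual ℝ _ f)

theorem arens1_inclusionInDoubleDual_right (F : StrongDual ℝ (StrongDual ℝ A)) (b : A) :
    arens1 A F (inclusionInDoubleDual ℝ A b) = arens2 A F (inclusionInDoubleDual ℝ A b) := by
  ext f
  exact congrArg F (by ext a; rfl)

end Arens

theorem stmt0_general (A : Type*) [NonUnitalNormedRing A] [NormedSpace ℝ A]
    [IsScalarTower ℝ A A] [SMulCommClass ℝ A A]
    (h : weakLeftCenter A = Set.univ) :
    ∀ F G : StrongDual ℝ (StrongDual ℝ A), arens1 A F G = arens2 A F G := by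
  intro F G
  ext f
  have hF : F ∈ weakLeftCenter A := h ▸ Set.mem_univ F
  -- `arens2 A F G f` is `G` evaluated at `g`.
  exact apply_eq_of_continuous_weakStarTop (Φ := ContinuousLinearMap.apply ℝ ℝ f ∘L arens1 A F)
    (g := adjBil (adjBil (ContinuousLinearMap.mul ℝ A).flip) F f)
    (continuous_arens1_apply_of_mem_weakLeftCenter hF f)
    (fun b => congr($(arens1_inclusionInDoubleDual_right F b) f)) G

/-- If the weak left topological center of `A**` is all of `A**`,
then `A` is Arens regular. -/
theorem stmt0 (A : Type*) [NonUnitalNormedRing A] [NormedSpace ℝ A]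
    [IsScalarTower ℝ A A] [SMulCommClass ℝ A A] [CompleteSpace A]
    (h : weakLeftCenter A = Set.univ) :
    ∀ F G : StrongDual ℝ (StrongDual ℝ A), arens1 A F G = arens2 A F G :=
  stmt0_general A h

end
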